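/- Let f : ℂ → ℂ be an SD map that preserves ℝ (i.e., f(x) is real for every real x). Then exactly one of the following holds: (1) f(z/z̄) = z/z̄ and f(z²) = z² for all nonzero complex z; or (2) f(z/z̄) = z̄/z and f(z²) = z̄² for all nonzero complex z. Here z̄ denotes the complex conjugate of z. -/

import Mathlib

open Complex

/-- A function `f : F → F` on a field `F` is an *SD map* if for all `x ≠ y` one has
`f x ≠ f y` and `f ((x+y)/(x-y)) = (f x + f y) / (f x - f y)`. -/
def IsSDMap {F : Type*} [Field F] (f : F → F) : Prop :=
  ∀ ⦃x y : F⦄, x ≠ y →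
    f x ≠ f y ∧ f ((x + y) / (x - y)) = (f x + f y) / (f x - f y)

/-!
Comparing the defining identity at two pairs with the same quotient `(x + y) / (x - y)` shows
that an SD map is multiplicative; comparing it at `(x, y)` and `(x ^ 2, y ^ 2)` gives
`f u + f v = 2 f ((u + v) / 2)` whenever `u` and `v` are nonzero squares. Since every complex
number is a square, `f` is then additive, so a ring endomorphism of `ℂ`. If it preserves `ℝ`,
its restriction is the unique ring endomorphism of `ℝ`, so `f` is the identity or complex
conjugation; the two alternatives are exclusive because `(1 + i) ^ 2 ≠ (1 - i) ^ 2`.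
-/

-- injectivity of the Möbius map `t ↦ (t + 1) / (t - 1)`, read on `t = a / b`
theorem mul_eq_mul_of_add_div_sub_eq_add_div_sub {K : Type*} [Field K] [NeZero (2 : K)]
    {a b c d : K} (hab : a ≠ b) (hcd : c ≠ d) (h : (a + b) / (a - b) = (c + d) / (c - d)) :
    a * d = b * c := by
  rw [div_eq_div_iff (sub_ne_zero.mpr hab) (sub_ne_zero.mpr hcd)] at h
  exact mul_left_cancel₀ (two_ne_zero (α := K)) (by linear_combination -h)

namespace IsSDMap

variable {F : Type*} [Field F] {f : F → F}

theorem injective (hf : IsSDMap f) : Function.Injective f := fun _ _ h =>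
  by_contra fun hxy => (hf hxy).1 h

theorem sub_mul_apply_add_div_sub (hf : IsSDMap f) {x y : F} (hxy : x ≠ y) :
    (f x - f y) * f ((x + y) / (x - y)) = f x + f y := by
  rw [(hf hxy).2, mul_div_cancel₀ _ (sub_ne_zero.mpr (hf hxy).1)]

variable [NeZero (2 : F)]

theorem mul_eq_mul_of_add_div_sub_eq (hf : IsSDMap f) {x y z w : F}
    (hxy : x ≠ y) (hzw : z ≠ w) (h : (x + y) / (x - y) = (z + w) / (z - w)) :
    f x * f w = f y * f z :=
  mul_eq_mul_of_add_div_sub_eq_add_div_sub (hf hxy).1 (hf hzw).1 <| by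
    rw [← (hf hxy).2, ← (hf hzw).2, h]

theorem map_one (hf : IsSDMap f) : f 1 = 1 := by
  -- the pairs `(1, 0)` and `(2, 0)` both have quotient `1`
  have h₁ := hf.sub_mul_apply_add_div_sub one_ne_zero
  have h₂ := hf.sub_mul_apply_add_div_sub (two_ne_zero (α := F))
  simp only [add_zero, sub_zero, div_self one_ne_zero, div_self (two_ne_zero (α := F))]
    at h₁ h₂
  have h₁₂ : f 1 - f 2 ≠ 0 :=
    sub_ne_zero.mpr <| hf.injective.ne fun h => one_ne_zero (by linear_combination -h)
  exact mul_left_cancel₀ h₁₂ (by linear_combination h₁ - h₂)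

theorem map_zero (hf : IsSDMap f) : f 0 = 0 := by
  have h := hf.sub_mul_apply_add_div_sub one_ne_zero
  simp only [add_zero, sub_zero, div_self one_ne_zero, hf.map_one] at h
  exact mul_left_cancel₀ (two_ne_zero (α := F)) (by linear_combination -h)

theorem map_ne_zero (hf : IsSDMap f) {x : F} (hx : x ≠ 0) : f x ≠ 0 :=
  hf.injective.ne hx |>.trans_eq hf.map_zero

theorem map_neg (hf : IsSDMap f) (x : F) : f (-x) = -f x := by
  rcases eq_or_ne x 0 with rfl | hx
  · simp [hf.map_zero]
  have h := hf.sub_mul_apply_add_div_sub (x := x) (y := -x)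
    fun h => hx (mul_left_cancel₀ (two_ne_zero (α := F)) (by linear_combination h))
  rw [add_neg_cancel, zero_div, hf.map_zero, mul_zero] at h
  linear_combination -h

theorem map_inv₀ (hf : IsSDMap f) (x : F) : f x⁻¹ = (f x)⁻¹ := by
  rcases eq_or_ne x 0 with rfl | hx
  · simp [hf.map_zero]
  rcases eq_or_ne x 1 with rfl | hx₁
  · simp [hf.map_one]
  -- `(x, 1)` and `(1, x⁻¹)` give the same quotient `(x + 1) / (x - 1)`
  have h := hf.mul_eq_mul_of_add_div_sub_eq hx₁ (inv_ne_one.mpr hx₁).symm (by field_simp)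
  simp only [hf.map_one, mul_one] at h
  exact (inv_eq_of_mul_eq_one_right h).symm

theorem map_mul (hf : IsSDMap f) (x y : F) : f (x * y) = f x * f y := by
  rcases eq_or_ne y 0 with rfl | hy
  · simp [hf.map_zero]
  rcases eq_or_ne x 1 with rfl | hx₁
  · simp [hf.map_one]
  have hxy : x * y ≠ y := fun h => hx₁ (mul_right_cancel₀ hy (h.trans (one_mul y).symm))
  have h := hf.mul_eq_mul_of_add_div_sub_eq hxy hx₁ <| by
    rw [div_eq_div_iff (sub_ne_zero.mpr hxy) (sub_ne_zero.mpr hx₁)]; ring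
  rw [hf.map_one, mul_one] at h
  rw [h, mul_comm]

theorem map_div₀ (hf : IsSDMap f) (x y : F) : f (x / y) = f x / f y := by
  rw [div_eq_mul_inv, hf.map_mul, hf.map_inv₀, div_eq_mul_inv]

theorem map_pow_two (hf : IsSDMap f) (x : F) : f (x ^ 2) = f x ^ 2 := by
  rw [sq, hf.map_mul, sq]

theorem map_add_sq_add_map_sub_sq (hf : IsSDMap f) {x y : F} (hxy : x ≠ y) (hxy' : x ≠ -y) :
    f ((x + y) ^ 2) + f ((x - y) ^ 2) = 2 * f (x ^ 2 + y ^ 2) := by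
  have hs : x + y ≠ 0 := fun h => hxy' (by linear_combination h)
  have hd : x - y ≠ 0 := sub_ne_zero.mpr hxy
  have hxy₂ : x ^ 2 ≠ y ^ 2 := fun h => mul_ne_zero hs hd (by linear_combination h)
  have h₁ := (hf hxy).2
  have h₂ := (hf hxy₂).2
  rw [hf.map_div₀] at h₁
  rw [show x ^ 2 - y ^ 2 = (x + y) * (x - y) by ring, hf.map_div₀, hf.map_mul, hf.map_pow_two,
    hf.map_pow_two] at h₂
  have hfxy : f x - f y ≠ 0 := sub_ne_zero.mpr (hf hxy).1
  have hfxy₂ : f x ^ 2 - f y ^ 2 ≠ 0 := by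
    simpa only [hf.map_pow_two] using sub_ne_zero.mpr (hf hxy₂).1
  rw [div_eq_div_iff (hf.map_ne_zero hd) hfxy] at h₁
  rw [div_eq_iff (mul_ne_zero (hf.map_ne_zero hs) (hf.map_ne_zero hd)), div_mul_eq_mul_div,
    eq_div_iff hfxy₂] at h₂
  rw [hf.map_pow_two, hf.map_pow_two]
  refine mul_right_cancel₀ hfxy₂ ?_
  linear_combination (f (x + y) * (f x + f y) - f (x - y) * (f x - f y)) * h₁ - 2 * h₂

theorem map_add_map_eq_two_mul_map_half (hf : IsSDMap f) (hsq : ∀ x : F, IsSquare x) {u v : F}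
    (hu : u ≠ 0) (hv : v ≠ 0) :
    f u + f v = 2 * f ((u + v) / 2) := by
  obtain ⟨s, rfl⟩ := hsq u
  obtain ⟨t, rfl⟩ := hsq v
  have hs : s ≠ 0 := by rintro rfl; simp at hu
  have ht : t ≠ 0 := by rintro rfl; simp at hv
  have h₂ : (2 : F) ≠ 0 := two_ne_zero
  have h := hf.map_add_sq_add_map_sub_sq (x := (s + t) / 2) (y := (s - t) / 2)
    (fun h => ht <| mul_left_cancel₀ h₂ (by field_simp at h; linear_combination h))
    (fun h => hs <| mul_left_cancel₀ h₂ (by field_simp at h; linear_combination h))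
  convert h using 3 <;> field_simp <;> ring

theorem map_two (hf : IsSDMap f) (hsq : ∀ x : F, IsSquare x) : f 2 = 2 := by
  have h := hf.map_add_map_eq_two_mul_map_half hsq (u := 2 ^ 2) (v := -2)
    (pow_ne_zero 2 two_ne_zero) (neg_ne_zero.mpr two_ne_zero)
  rw [show ((2 : F) ^ 2 + -2) / 2 = 1 by rw [div_eq_one_iff_eq two_ne_zero]; ring,
    hf.map_pow_two, hf.map_neg, hf.map_one] at h
  rcases mul_eq_zero.mp (show (f 2 - 2) * (f 2 + 1) = 0 by linear_combination h) with h₂ | h₁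
  · exact sub_eq_zero.mp h₂
  -- `f 2 = -1 = f (-1)` forces `2 = -1`, that is, characteristic `3`
  have h₃ : (2 : F) = -1 := hf.injective <| by
    rw [hf.map_neg, hf.map_one]; linear_combination h₁
  calc f 2 = -1 := by linear_combination h₁
    _ = 2 := h₃.symm

theorem map_add (hf : IsSDMap f) (hsq : ∀ x : F, IsSquare x) (x y : F) :
    f (x + y) = f x + f y := by
  rcases eq_or_ne x 0 with rfl | hx
  · simp [hf.map_zero]
  rcases eq_or_ne y 0 with rfl | hy
  · simp [hf.map_zero]
  calc f (x + y) = f (2 * ((x + y) / 2)) := by rw [mul_div_cancel₀ _ two_ne_zero]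
    _ = f x + f y := by
      rw [hf.map_mul, hf.map_two hsq, hf.map_add_map_eq_two_mul_map_half hsq hx hy]

def toRingHom (hf : IsSDMap f) (hsq : ∀ x : F, IsSquare x) : F →+* F where
  toFun := f
  map_one' := hf.map_one
  map_mul' := hf.map_mul
  map_zero' := hf.map_zero
  map_add' := hf.map_add hsq

end IsSDMap

theorem Complex.ringHom_eq_id_or_conj_of_preserves_real {φ : ℂ →+* ℂ}
    (hφ : ∀ x : ℝ, ∃ r : ℝ, φ x = r) : φ = RingHom.id ℂ ∨ φ = starRingEnd ℂ := by
  choose r hr using hφ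
  let ψ : ℝ →+* ℝ :=
    { toFun := r
      map_one' := ofReal_injective (by simp [← hr])
      map_mul' := fun x y => ofReal_injective (by simp [← hr])
      map_zero' := ofReal_injective (by simp [← hr])
      map_add' := fun x y => ofReal_injective (by simp [← hr]) }
  have hfix (x : ℝ) : φ x = x := by
    rw [hr, show r x = ψ x from rfl, Subsingleton.elim ψ (RingHom.id ℝ), RingHom.id_apply]
  rcases real_algHom_eq_id_or_conj ⟨φ, hfix⟩ with h | h
  · exact .inl (RingHom.ext fun z => DFunLike.congr_fun h z)
  · exact .inr (RingHom.ext fun z => DFunLike.congr_fun h z)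

theorem sd_map_complex_real_preserving_dichotomy (f : ℂ → ℂ) (hf : IsSDMap f)
    (hR : ∀ x : ℝ, ∃ r : ℝ, f (x : ℂ) = (r : ℂ)) :
    Xor'
      (∀ z : ℂ, z ≠ 0 →
        f (z / (starRingEnd ℂ) z) = z / (starRingEnd ℂ) z ∧ f (z ^ 2) = z ^ 2)
      (∀ z : ℂ, z ≠ 0 →
        f (z / (starRingEnd ℂ) z) = (starRingEnd ℂ) z / z ∧
          f (z ^ 2) = ((starRingEnd ℂ) z) ^ 2) := by
  have h1I : (1 + I : ℂ) ≠ 0 := by simp [Complex.ext_iff]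
  have hsq_ne : (1 + I) ^ 2 ≠ (starRingEnd ℂ) (1 + I) ^ 2 := by norm_num [Complex.ext_iff, sq]
  refine (xor_iff_or_and_not_and _ _).mpr
    ⟨?_, fun ⟨h₁, h₂⟩ => hsq_ne ((h₁ _ h1I).2.symm.trans (h₂ _ h1I).2)⟩
  have hφ : ⇑(hf.toRingHom isSquare) = f := rfl
  rcases ringHom_eq_id_or_conj_of_preserves_real (hφ ▸ hR) with h | h
  · have hf_id (z : ℂ) : f z = z := by rw [← hφ, h, RingHom.id_apply]
    exact .inl fun z _ => ⟨hf_id _, hf_id _⟩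
  · have hf_conj (z : ℂ) : f z = starRingEnd ℂ z := by rw [← hφ, h]
    exact .inr fun z _ => ⟨by rw [hf_conj, map_div₀, conj_conj], by rw [hf_conj, map_pow]⟩
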